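/- arXiv:0709.3784 — 6 statements merged into one kernel-verified Lean document; each statement's English description precedes it below -/
import Mathlib

section
/- The set 𝕂 of generalised Puiseux series over ℂ is a subfield of the Hahn series field HahnSeries ℝ ℂ: it contains 0 and 1, and is closed under addition, negation, multiplication, and multiplicative inverses of nonzero elements. -/
/-!
Since `supp (f g) ⊆ supp f + supp g` and a sum of two sets with finitely many elements below any
bound again has this property, the series in question form a subring.  For inverses, Mathlib
defines `f⁻¹ = c X^(-v) · ∑ₙ yⁿ` with `v = ord f`, `c` the inverse of the leading coefficient and
`y = 1 - c X^(-v) f`, whose support is positive.  Every exponent of `∑ₙ yⁿ` is a sum of positive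
exponents of `y`; as these are at least some `ε > 0`, only sums of at most `n` of them lie below
`n • ε`, and by the Archimedean property this covers any bound.
-/
/-- A Hahn series `f : HahnSeries ℝ ℂ` is a *generalised Puiseux series* (i.e. lies in `𝕂`)
if its support has finite intersection with `(-∞, M]` for every real `M`. -/
def IsGenPuiseux (f : HahnSeries ℝ ℂ) : Prop :=
  ∀ M : ℝ, (f.support ∩ Set.Iic M).Finite

open Pointwise

namespace Set

variable {Γ : Type*}

def FiniteBelow [Preorder Γ] (A : Set Γ) : Prop :=
  ∀ M : Γ, (A ∩ Iic M).Finite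

section Preorder

variable [Preorder Γ] {A B : Set Γ}

theorem FiniteBelow.mono (hA : A.FiniteBelow) (hBA : B ⊆ A) : B.FiniteBelow :=
  fun M => (hA M).subset (inter_subset_inter_left _ hBA)

theorem Finite.finiteBelow (hA : A.Finite) : A.FiniteBelow :=
  fun _ => hA.subset inter_subset_left

theorem FiniteBelow.union (hA : A.FiniteBelow) (hB : B.FiniteBelow) : (A ∪ B).FiniteBelow :=
  fun M => by
    rw [union_inter_distrib_right]
    exact (hA M).union (hB M)

end Preorder

section LinearOrder

variable [LinearOrder Γ] {A : Set Γ}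

theorem FiniteBelow.exists_isLeast (hA : A.FiniteBelow) (hne : A.Nonempty) :
    ∃ m, IsLeast A m := by
  obtain ⟨a, ha⟩ := hne
  obtain ⟨m, ⟨hmA, hma⟩, hmin⟩ := exists_min_image _ id (hA a) ⟨a, ha, le_refl a⟩
  refine ⟨m, hmA, fun b hb => ?_⟩
  rcases le_or_gt b a with hba | hab
  · exact hmin b ⟨hb, hba⟩
  · exact hma.trans hab.le

theorem FiniteBelow.bddBelow [Nonempty Γ] (hA : A.FiniteBelow) : BddBelow A := by
  rcases A.eq_empty_or_nonempty with rfl | hne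
  · exact bddBelow_empty
  · obtain ⟨m, hm⟩ := hA.exists_isLeast hne
    exact hm.bddBelow

end LinearOrder

variable [AddCommGroup Γ] [LinearOrder Γ] [IsOrderedAddMonoid Γ] {A B : Set Γ}

theorem FiniteBelow.add (hA : A.FiniteBelow) (hB : B.FiniteBelow) : (A + B).FiniteBelow := by
  obtain ⟨a₀, ha₀⟩ := hA.bddBelow
  obtain ⟨b₀, hb₀⟩ := hB.bddBelow
  intro M
  refine ((hA (M - b₀)).add (hB (M - a₀))).subset ?_
  rintro _ ⟨⟨a, ha, b, hb, rfl⟩, hM⟩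
  have ha₀a : a₀ ≤ a := ha₀ ha
  have hb₀b : b₀ ≤ b := hb₀ hb
  rw [mem_Iic] at hM
  exact add_mem_add ⟨ha, le_sub_iff_add_le.mpr ((add_le_add_right hb₀b a).trans hM)⟩
    ⟨hb, le_sub_iff_add_le'.mpr ((add_le_add_left ha₀a b).trans hM)⟩

theorem FiniteBelow.addSubmonoid_closure [Archimedean Γ] (hA : A.FiniteBelow)
    (hpos : ∀ a ∈ A, 0 < a) : (AddSubmonoid.closure A : Set Γ).FiniteBelow := by
  rcases A.eq_empty_or_nonempty with rfl | hne
  · simp only [AddSubmonoid.closure_empty, AddSubmonoid.coe_bot]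
    exact (finite_singleton 0).finiteBelow
  obtain ⟨ε, hεA, hε⟩ := hA.exists_isLeast hne
  have hnonneg : ∀ x ∈ AddSubmonoid.closure A, 0 ≤ x := fun x hx =>
    AddSubmonoid.closure_induction (fun a ha => (hpos a ha).le) le_rfl
      (fun _ _ _ _ hx hy => add_nonneg hx hy) hx
  -- an element `a + y` of the closure below `(n + 1) • ε` has `a ≤ (n + 1) • ε` and `y ≤ n • ε`
  have hstep : ∀ n : ℕ, (AddSubmonoid.closure A : Set Γ) ∩ Iic ((n + 1) • ε) ⊆
      insert 0 ((A ∩ Iic ((n + 1) • ε)) + (AddSubmonoid.closure A : Set Γ) ∩ Iic (n • ε)) := by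
    rintro n x ⟨hx, hxM⟩
    induction hx using AddSubmonoid.closure_induction_left with
    | zero => exact mem_insert 0 _
    | add_left a ha y hy _ =>
      rw [mem_Iic, succ_nsmul] at hxM
      refine mem_insert_of_mem _ (add_mem_add ⟨ha, ?_⟩ ⟨hy, ?_⟩)
      · exact (le_add_of_nonneg_right (hnonneg y hy)).trans (by rwa [succ_nsmul])
      · exact le_of_add_le_add_right
          ((add_le_add_right (hε ha) y).trans ((add_comm y a).le.trans hxM))
  have hfinite : ∀ n : ℕ, ((AddSubmonoid.closure A : Set Γ) ∩ Iic (n • ε)).Finite := by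
    intro n
    induction n with
    | zero =>
      refine (finite_singleton 0).subset fun x ⟨hx, hx0⟩ => ?_
      exact le_antisymm (by simpa using hx0) (hnonneg x hx)
    | succ n ih => exact (((hA _).add ih).insert 0).subset (hstep n)
  intro M
  obtain ⟨n, hn⟩ := Archimedean.arch M (hpos ε hεA)
  exact (hfinite n).subset (inter_subset_inter_right _ (Iic_subset_Iic.mpr hn))

end Set

namespace HahnSeries

open Set

theorem finiteBelow_support_single {Γ R : Type*} [PartialOrder Γ] [Zero R] (a : Γ) (r : R) :
    (single a r).support.FiniteBelow :=
  ((finite_singleton a).subset support_single_subset).finiteBelow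

variable {Γ R : Type*} [AddCommGroup Γ] [LinearOrder Γ] [IsOrderedAddMonoid Γ]

theorem finiteBelow_support_mul [Ring R] {f g : HahnSeries Γ R} (hf : f.support.FiniteBelow)
    (hg : g.support.FiniteBelow) : (f * g).support.FiniteBelow :=
  (hf.add hg).mono support_mul_subset

variable (Γ R) in
def genPuiseuxSubring [Ring R] : Subring (HahnSeries Γ R) where
  carrier := {f | f.support.FiniteBelow}
  zero_mem' := show (0 : HahnSeries Γ R).support.FiniteBelow by
    rw [support_zero]
    exact finite_empty.finiteBelow
  one_mem' := show (1 : HahnSeries Γ R).support.FiniteBelow by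
    rw [← single_zero_one]
    exact finiteBelow_support_single 0 1
  add_mem' hf hg := (FiniteBelow.union hf hg).mono (support_add_subset _ _)
  neg_mem' {f} hf := show (-f).support.FiniteBelow by rwa [support_neg]
  mul_mem' := finiteBelow_support_mul

theorem support_hsum_powers_subset [CommRing R] (y : HahnSeries Γ R) :
    (SummableFamily.powers y).hsum.support ⊆ AddSubmonoid.closure {γ ∈ y.support | 0 < γ} := by
  refine SummableFamily.support_hsum_subset.trans (iUnion_subset fun n => ?_)
  rw [SummableFamily.powers_toFun]
  refine (SummableFamily.support_pow_subset_closure _ n).trans (AddSubmonoid.closure_mono ?_)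
  split_ifs with hy
  · exact fun γ hγ => ⟨hγ, WithTop.coe_lt_coe.mp (hy.trans_le (orderTop_le_of_coeff_ne_zero hγ))⟩
  · simp

variable [Archimedean Γ]

theorem finiteBelow_support_inv [Field R] {f : HahnSeries Γ R} (hf : f.support.FiniteBelow) :
    f⁻¹.support.FiniteBelow := by
  set c := single (-f.order) f.leadingCoeff⁻¹
  have hy : (1 - c * f).support.FiniteBelow :=
    sub_mem (one_mem (genPuiseuxSubring Γ R))
      (mul_mem (finiteBelow_support_single _ _) hf : c * f ∈ genPuiseuxSubring Γ R)
  rw [inv_def]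
  exact finiteBelow_support_mul (finiteBelow_support_single _ _)
    (((hy.mono (sep_subset _ _)).addSubmonoid_closure fun _ h => h.2).mono
      (support_hsum_powers_subset _))

variable (Γ R) in
def genPuiseux [Field R] : Subfield (HahnSeries Γ R) :=
  { genPuiseuxSubring Γ R with inv_mem' := fun _ => finiteBelow_support_inv }

end HahnSeries

/-- The set `𝕂` of generalised Puiseux series over `ℂ` is a subfield of the Hahn series
field `HahnSeries ℝ ℂ`: it contains `0` and `1` and is closed under addition, negation,
multiplication and inverses of nonzero elements. -/
theorem genPuiseux_subfield :
    ∃ S : Subfield (HahnSeries ℝ ℂ), (S : Set (HahnSeries ℝ ℂ)) = {f | IsGenPuiseux f} :=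
  ⟨HahnSeries.genPuiseux ℝ ℂ, rfl⟩
end

section
/- The field 𝕂 of generalised Puiseux series over ℂ is algebraically closed: every non-constant polynomial with coefficients in 𝕂 has a root in 𝕂. -/
open Polynomial
open scoped HahnSeries

theorem Set.isWF_of_finite_inter_Iic {α : Type*} [LinearOrder α] {s : Set α}
    (h : ∀ a, (s ∩ Set.Iic a).Finite) : s.IsWF := by
  rw [Set.isWF_iff_no_descending_seq]
  intro f hf hmem
  refine Set.infinite_of_injective_forall_mem hf.injective (s := s ∩ Set.Iic (f 0)) ?_ (h (f 0))
  exact fun n => ⟨hmem n, hf.antitone n.zero_le⟩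

theorem HahnSeries.le_of_le_orderTop {Γ R : Type*} [LinearOrder Γ] [Zero R] {x : R⟦Γ⟧} {r s : Γ}
    (h : (r : WithTop Γ) ≤ x.orderTop) (hs : s ∈ x.support) : r ≤ s :=
  WithTop.coe_le_coe.mp (h.trans (orderTop_le_of_coeff_ne_zero hs))

theorem HahnSeries.algebraMap_eq_single (c : ℂ) : algebraMap ℂ ℂ⟦ℝ⟧ c = HahnSeries.single 0 c := by
  simp [HahnSeries.algebraMap_apply']

theorem WithTop.exists_coe_pos_le {x : WithTop ℝ} (hx : 0 < x) :
    ∃ δ : ℝ, 0 < δ ∧ (δ : WithTop ℝ) ≤ x := by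
  obtain ⟨y, h0y, hyx⟩ := exists_between hx
  lift y to ℝ using hyx.ne_top
  exact ⟨y, WithTop.coe_pos.mp h0y, hyx.le⟩

theorem Polynomial.smul_divByMonic {R : Type*} [CommRing R] (c : R) (p q : R[X]) :
    c • p /ₘ q = c • (p /ₘ q) := by
  by_cases hq : q.Monic
  · nontriviality R
    exact (div_modByMonic_unique (c • (p /ₘ q)) (c • (p %ₘ q)) hq
      ⟨by rw [mul_smul_comm, ← smul_add, modByMonic_add_div],
        (degree_smul_le _ _).trans_lt (degree_modByMonic_lt _ hq)⟩).1
  · simp [divByMonic_eq_of_not_monic _ hq]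

theorem Polynomial.coeff_div_modByMonic_map_mem {R S : Type*} [CommRing R] [Ring S] [Algebra R S]
    {M : Submodule R S} (hM : 1 ∈ M) {p : S[X]} (hp : ∀ i, p.coeff i ∈ M) (q : R[X]) (i : ℕ) :
    (p /ₘ q.map (algebraMap R S)).coeff i ∈ M ∧ (p %ₘ q.map (algebraMap R S)).coeff i ∈ M := by
  have hq (j : ℕ) : (q.map (algebraMap R S)).coeff j ∈ (1 : Submodule R S) := by
    rw [coeff_map]
    exact Submodule.algebraMap_mem _
  have h1 : (1 : S) ∈ (1 : Submodule R S) := Submodule.one_le.mp le_rfl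
  have hdiv := coeff_divByMonic_mem_pow_natDegree_mul p _ M hp hM 1 hq h1 i
  have hmod := coeff_modByMonic_mem_pow_natDegree_mul p _ M hp hM 1 hq h1 i
  rw [one_pow, one_mul] at hdiv hmod
  exact ⟨hdiv, hmod⟩

theorem Polynomial.Monic.of_degree_sub_lt {R : Type*} [Ring R] [Nontrivial R] {p q : R[X]}
    (hp : p.Monic) (h : (q - p).degree < p.natDegree) : q.Monic ∧ q.natDegree = p.natDegree := by
  have hlt : (q - p).degree < p.degree := by rwa [degree_eq_natDegree hp.ne_zero]
  rw [← add_sub_cancel p q]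
  exact ⟨hp.add_of_left hlt, natDegree_add_eq_left_of_degree_lt hlt⟩

theorem Polynomial.coeff_X_sub_C_pow_sub_one {R : Type*} [CommRing R] (c : R) {n : ℕ}
    (hn : 0 < n) : ((X - C c) ^ n).coeff (n - 1) = -(n * c) := by
  rw [sub_eq_add_neg, ← C_neg, coeff_X_add_C_pow, Nat.sub_sub_self hn, pow_one,
    Nat.choose_symm hn, Nat.choose_one_right]
  ring

theorem Polynomial.coeff_taylor_natDegree_sub_one {R : Type*} [CommRing R] {q : R[X]}
    (hq : q.Monic) (hn : 0 < q.natDegree) (s : R) :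
    (taylor s q).coeff (q.natDegree - 1) = q.coeff (q.natDegree - 1) + q.natDegree * s := by
  have hlt : (hasseDeriv (q.natDegree - 1) q).natDegree < 2 :=
    (natDegree_hasseDeriv_le _ _).trans_lt (by omega)
  rw [taylor_coeff, eval_eq_sum_range' hlt, Finset.sum_range_succ, Finset.sum_range_one]
  simp only [hasseDeriv_coeff, zero_add, Nat.choose_self, Nat.cast_one, one_mul, pow_zero,
    mul_one, pow_one, Nat.add_sub_cancel' hn, hq.coeff_natDegree, Nat.choose_symm hn,
    Nat.choose_one_right]

-- Over an algebraically closed field, split off the full power of one root; the vanishing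
-- subleading coefficient forbids that power from being all of `R` (the root is nonzero).
theorem Polynomial.exists_coprime_factorization {k : Type*} [Field k] [IsAlgClosed k]
    [CharZero k] {R : k[X]} {n : ℕ} (hR : 0 < R.natDegree) (hRn : R.natDegree ≤ n)
    (h0 : R.coeff 0 ≠ 0) (hsub : R.coeff (n - 1) = 0) :
    ∃ f g : k[X], f.Monic ∧ IsCoprime f g ∧ R = f * g ∧ 0 < f.natDegree ∧ f.natDegree < n := by
  have hR0 : R ≠ 0 := ne_zero_of_natDegree_gt hR
  obtain ⟨c, hc⟩ := IsAlgClosed.exists_root R (natDegree_pos_iff_degree_pos.mp hR).ne'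
  have hc0 : c ≠ 0 := by
    rintro rfl
    exact h0 (by rwa [coeff_zero_eq_eval_zero])
  set d := rootMultiplicity c R
  have hdeg : ((X - C c) ^ d).natDegree = d := by simp
  refine ⟨(X - C c) ^ d, R /ₘ (X - C c) ^ d, (monic_X_sub_C c).pow d, ?_,
    (pow_mul_divByMonic_rootMultiplicity_eq R c).symm, ?_, ?_⟩
  · refine IsCoprime.pow_left ((irreducible_X_sub_C c).coprime_iff_not_dvd.mpr fun hdvd => ?_)
    exact eval_divByMonic_pow_rootMultiplicity_ne_zero c hR0 (dvd_iff_isRoot.mp hdvd)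
  · rw [hdeg]
    exact (rootMultiplicity_pos hR0).mpr hc
  rw [hdeg]
  by_contra! hnd
  obtain ⟨g, rfl⟩ := (le_rootMultiplicity_iff hR0).mp hnd
  have hg0 : g ≠ 0 := right_ne_zero_of_mul hR0
  have hn : 0 < n := hR.trans_le hRn
  have hg : g.natDegree = 0 := by
    have := natDegree_mul (pow_ne_zero n (X_sub_C_ne_zero c)) hg0
    simp only [natDegree_pow, natDegree_X_sub_C, mul_one] at this
    omega
  rw [eq_C_of_natDegree_eq_zero hg, coeff_mul_C, coeff_X_sub_C_pow_sub_one c hn] at hsub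
  have hg0' : g.coeff 0 ≠ 0 := fun h => hg0 (by rw [eq_C_of_natDegree_eq_zero hg, h, C_0])
  simp [hc0, hg0', hn.ne'] at hsub

theorem IsGenPuiseux.mono {f g : ℂ⟦ℝ⟧} (hg : IsGenPuiseux g) (h : f.support ⊆ g.support) :
    IsGenPuiseux f :=
  fun M => (hg M).subset (Set.inter_subset_inter_left _ h)

theorem isGenPuiseux_single (a : ℝ) (c : ℂ) : IsGenPuiseux (HahnSeries.single a c) :=
  fun _ => (Set.finite_singleton a).subset <|
    Set.inter_subset_left.trans HahnSeries.support_single_subset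

theorem isGenPuiseux_zero : IsGenPuiseux 0 := by
  simpa using isGenPuiseux_single 0 0

theorem isGenPuiseux_one : IsGenPuiseux 1 :=
  isGenPuiseux_single 0 1

theorem IsGenPuiseux.add {f g : ℂ⟦ℝ⟧} (hf : IsGenPuiseux f) (hg : IsGenPuiseux g) :
    IsGenPuiseux (f + g) := fun M =>
  ((hf M).union (hg M)).subset <| Set.union_inter_distrib_right _ _ _ ▸
    Set.inter_subset_inter_left _ (HahnSeries.support_add_subset f g)

theorem IsGenPuiseux.neg {f : ℂ⟦ℝ⟧} (hf : IsGenPuiseux f) : IsGenPuiseux (-f) :=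
  hf.mono HahnSeries.support_neg.subset

theorem IsGenPuiseux.sub {f g : ℂ⟦ℝ⟧} (hf : IsGenPuiseux f) (hg : IsGenPuiseux g) :
    IsGenPuiseux (f - g) :=
  sub_eq_add_neg f g ▸ hf.add hg.neg

theorem IsGenPuiseux.mul {f g : ℂ⟦ℝ⟧} (hf : IsGenPuiseux f) (hg : IsGenPuiseux g) :
    IsGenPuiseux (f * g) := by
  intro M
  refine (Set.Finite.image2 (· + ·) (hf (M - g.order)) (hg (M - f.order))).subset ?_
  rintro _ ⟨hx, hxM⟩
  obtain ⟨α, hα, β, hβ, rfl⟩ := HahnSeries.support_mul_subset hx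
  have hfα := HahnSeries.order_le_of_coeff_ne_zero hα
  have hgβ := HahnSeries.order_le_of_coeff_ne_zero hβ
  have hM : α + β ≤ M := hxM
  exact Set.mem_image2_of_mem ⟨hα, show α ≤ M - g.order by linarith⟩
    ⟨hβ, show β ≤ M - f.order by linarith⟩

theorem IsGenPuiseux.pow {f : ℂ⟦ℝ⟧} (hf : IsGenPuiseux f) (n : ℕ) : IsGenPuiseux (f ^ n) := by
  induction n with
  | zero => simpa using isGenPuiseux_one
  | succ n ih => simpa [pow_succ] using ih.mul hf

theorem finite_iUnion_support_inter_Iic {c : ℕ → ℂ⟦ℝ⟧} {a δ : ℝ} (hδ : 0 < δ)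
    (hc : ∀ k, IsGenPuiseux (c k)) (hv : ∀ k : ℕ, ((a + k * δ : ℝ) : WithTop ℝ) ≤ (c k).orderTop)
    (M : ℝ) : ((⋃ k, (c k).support) ∩ Set.Iic M).Finite := by
  obtain ⟨N, hN⟩ := exists_nat_gt ((M - a) / δ)
  rw [div_lt_iff₀ hδ] at hN
  refine (Set.finite_Iio N |>.biUnion fun k _ => hc k M).subset ?_
  rintro x ⟨hx, hxM⟩
  obtain ⟨k, hk⟩ := Set.mem_iUnion.mp hx
  have hkx := HahnSeries.le_of_le_orderTop (hv k) hk
  have hkN : k < N := by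
    by_contra! hNk
    have : (N : ℝ) * δ ≤ k * δ := by gcongr
    simp only [Set.mem_Iic] at hxM
    linarith
  exact Set.mem_biUnion hkN ⟨hk, hxM⟩

theorem IsGenPuiseux.of_support_subset_iUnion {f : ℂ⟦ℝ⟧} {c : ℕ → ℂ⟦ℝ⟧} {a δ : ℝ} (hδ : 0 < δ)
    (hc : ∀ k, IsGenPuiseux (c k)) (hv : ∀ k : ℕ, ((a + k * δ : ℝ) : WithTop ℝ) ≤ (c k).orderTop)
    (hf : f.support ⊆ ⋃ k, (c k).support) : IsGenPuiseux f :=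
  fun M => (finite_iUnion_support_inter_Iic hδ hc hv M).subset (Set.inter_subset_inter_left _ hf)

theorem IsGenPuiseux.hsum_powers {g : ℂ⟦ℝ⟧} (hg : IsGenPuiseux g) :
    IsGenPuiseux (HahnSeries.SummableFamily.powers g).hsum := by
  -- `powers g` silently replaces `g` by `0` unless `0 < g.orderTop`
  set g' := if 0 < g.orderTop then g else 0
  have hg' : IsGenPuiseux g' := by unfold g'; split_ifs <;> simp [hg, isGenPuiseux_zero]
  have hpos : 0 < g'.orderTop := by unfold g'; split_ifs with h <;> simp [h]
  obtain ⟨δ, hδ, hδg⟩ := WithTop.exists_coe_pos_le hpos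
  refine IsGenPuiseux.of_support_subset_iUnion (c := (g' ^ ·)) (a := 0) hδ (hg'.pow ·)
    (fun k => ?_) HahnSeries.SummableFamily.support_hsum_subset
  calc (((0 : ℝ) + k * δ : ℝ) : WithTop ℝ) = k • (δ : WithTop ℝ) := by simp [← nsmul_eq_mul]
    _ ≤ k • g'.orderTop := nsmul_le_nsmul_right hδg k
    _ ≤ (g' ^ k).orderTop := HahnSeries.orderTop_nsmul_le_orderTop_pow

theorem IsGenPuiseux.inv {f : ℂ⟦ℝ⟧} (hf : IsGenPuiseux f) : IsGenPuiseux f⁻¹ := by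
  rw [HahnSeries.inv_def]
  exact (isGenPuiseux_single _ _).mul
    (isGenPuiseux_one.sub ((isGenPuiseux_single _ _).mul hf)).hsum_powers

noncomputable section

namespace GenPuiseux

def genPuiseux : IntermediateField ℂ ℂ⟦ℝ⟧ where
  carrier := {f | IsGenPuiseux f}
  mul_mem' := IsGenPuiseux.mul
  one_mem' := isGenPuiseux_one
  add_mem' := IsGenPuiseux.add
  zero_mem' := isGenPuiseux_zero
  algebraMap_mem' c := by simpa [HahnSeries.algebraMap_eq_single] using isGenPuiseux_single 0 c
  inv_mem' _ := IsGenPuiseux.inv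

local notation "𝕂" => genPuiseux

def val : AddValuation 𝕂 (WithTop ℝ) :=
  (HahnSeries.addVal ℝ ℂ).comap (algebraMap 𝕂 ℂ⟦ℝ⟧)

theorem val_apply (x : 𝕂) : val x = (x : ℂ⟦ℝ⟧).orderTop := rfl

theorem val_eq_order {x : 𝕂} (hx : x ≠ 0) : val x = ((x : ℂ⟦ℝ⟧).order : WithTop ℝ) :=
  (HahnSeries.order_eq_orderTop_of_ne_zero (by simpa using hx)).symm

theorem eq_zero_of_forall_le_val {x : 𝕂} (h : ∀ r : ℝ, (r : WithTop ℝ) ≤ val x) : x = 0 :=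
  (AddValuation.top_iff val).mp (WithTop.eq_top_iff_forall_ge.mpr h)

theorem val_algebraMap_nonneg (c : ℂ) : 0 ≤ val (algebraMap ℂ 𝕂 c) := by
  simpa [val_apply, HahnSeries.algebraMap_eq_single] using
    HahnSeries.orderTop_single_le (a := (0 : ℝ)) (r := c)

def tpow (μ : ℝ) : 𝕂 := ⟨HahnSeries.single μ 1, isGenPuiseux_single μ 1⟩

@[simp] theorem coe_tpow (μ : ℝ) : (tpow μ : ℂ⟦ℝ⟧) = HahnSeries.single μ 1 := rfl

theorem tpow_add (a b : ℝ) : tpow (a + b) = tpow a * tpow b :=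
  Subtype.ext (by simp [HahnSeries.single_mul_single])

@[simp] theorem tpow_zero : tpow 0 = 1 := rfl

theorem tpow_pow (μ : ℝ) (i : ℕ) : tpow μ ^ i = tpow (i * μ) :=
  Subtype.ext (by simp [HahnSeries.single_pow, nsmul_eq_mul])

theorem tpow_ne_zero (μ : ℝ) : tpow μ ≠ 0 := fun h =>
  HahnSeries.single_ne_zero one_ne_zero (congrArg Subtype.val h)

@[simp] theorem val_tpow (μ : ℝ) : val (tpow μ) = μ := by
  simp [val_apply, HahnSeries.orderTop_single]

def residue (x : 𝕂) : ℂ := (x : ℂ⟦ℝ⟧).coeff 0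

@[simp] theorem residue_zero : residue 0 = 0 := rfl

@[simp] theorem residue_sub (x y : 𝕂) : residue (x - y) = residue x - residue y := rfl

@[simp] theorem residue_algebraMap (c : ℂ) : residue (algebraMap ℂ 𝕂 c) = c := by
  simp [residue, HahnSeries.algebraMap_eq_single]

theorem residue_ne_zero_of_val_eq_zero {x : 𝕂} (h : val x = 0) : residue x ≠ 0 :=
  HahnSeries.coeff_orderTop_ne h

theorem pos_val_of_residue_eq_zero {x : 𝕂} (h : 0 ≤ val x) (hx : residue x = 0) : 0 < val x :=
  h.lt_of_ne fun h0 => residue_ne_zero_of_val_eq_zero h0.symm hx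

theorem exists_le_val_sub_sum {c : ℕ → 𝕂} {a δ : ℝ} (hδ : 0 < δ)
    (hc : ∀ k : ℕ, ((a + k * δ : ℝ) : WithTop ℝ) ≤ val (c k)) :
    ∃ S : 𝕂, ∀ K : ℕ, ((a + K * δ : ℝ) : WithTop ℝ) ≤ val (S - ∑ k ∈ Finset.range K, c k) := by
  have hzero {k : ℕ} {j : ℝ} (hj : j < a + k * δ) : (c k : ℂ⟦ℝ⟧).coeff j = 0 :=
    HahnSeries.coeff_eq_zero_of_lt_orderTop ((WithTop.coe_lt_coe.mpr hj).trans_le (hc k))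
  have hfin := finite_iUnion_support_inter_Iic hδ (fun k => (c k).2) hc
  let family : HahnSeries.SummableFamily ℝ ℂ ℕ :=
    { toFun k := c k
      isPWO_iUnion_support' := (Set.isWF_of_finite_inter_Iic hfin).isPWO
      finite_co_support' j := by
        obtain ⟨N, hN⟩ := exists_nat_gt ((j - a) / δ)
        rw [div_lt_iff₀ hδ] at hN
        refine (Set.finite_Iio N).subset fun k hk => ?_
        by_contra! hNk
        have : (N : ℝ) * δ ≤ k * δ := by gcongr; simpa using hNk
        exact hk (hzero (by linarith)) }
  refine ⟨⟨family.hsum, IsGenPuiseux.of_support_subset_iUnion hδ (fun k => (c k).2) hc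
    HahnSeries.SummableFamily.support_hsum_subset⟩, fun K => ?_⟩
  rw [val_apply, HahnSeries.le_orderTop_iff_forall]
  intro j hj
  have hsub : {k | (family k).coeff j ≠ 0} ⊆ (Finset.range K : Set ℕ) := fun k hk => by
    by_contra! hKk
    have : (K : ℝ) * δ ≤ k * δ := by gcongr; simpa using hKk
    exact hk (hzero (by linarith [WithTop.coe_lt_coe.mp hj]))
  push_cast
  rw [HahnSeries.coeff_sub, HahnSeries.SummableFamily.coeff_hsum_eq_sum_of_subset hsub,
    HahnSeries.coeff_sum]
  exact sub_self _

def valGE (δ : ℝ) : Submodule ℂ 𝕂 where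
  carrier := {x | (δ : WithTop ℝ) ≤ val x}
  add_mem' := val.map_le_add
  zero_mem' := by simp
  smul_mem' c x hx := by
    simpa [Algebra.smul_def] using add_le_add (val_algebraMap_nonneg c) hx

theorem mem_valGE {δ : ℝ} {x : 𝕂} : x ∈ valGE δ ↔ (δ : WithTop ℝ) ≤ val x := Iff.rfl

def coeffValGE (δ : ℝ) : AddSubgroup 𝕂[X] where
  carrier := {P | ∀ i, P.coeff i ∈ valGE δ}
  add_mem' hP hQ i := by simpa using add_mem (hP i) (hQ i)
  zero_mem' i := by simp
  neg_mem' hP i := by simpa using neg_mem (hP i)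

theorem coeffValGE_antitone : Antitone coeffValGE := fun _ _ hδ _ hP i =>
  (WithTop.coe_le_coe.mpr hδ).trans (hP i)

theorem mul_mem_coeffValGE {δ ε : ℝ} {P Q : 𝕂[X]} (hP : P ∈ coeffValGE δ)
    (hQ : Q ∈ coeffValGE ε) : P * Q ∈ coeffValGE (δ + ε) := fun i => by
  rw [mem_valGE, coeff_mul]
  refine val.map_le_sum fun x _ => ?_
  rw [val.map_mul, WithTop.coe_add]
  exact add_le_add (hP x.1) (hQ x.2)

theorem map_mem_coeffValGE_zero (f : ℂ[X]) : f.map (algebraMap ℂ 𝕂) ∈ coeffValGE 0 := fun i => by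
  rw [coeff_map]
  exact val_algebraMap_nonneg _

theorem tpow_smul_mem_coeffValGE {δ : ℝ} (μ : ℝ) {P : 𝕂[X]} (hP : P ∈ coeffValGE δ) :
    tpow μ • P ∈ coeffValGE (μ + δ) := fun i => by
  rw [coeff_smul, smul_eq_mul, mem_valGE, val.map_mul, val_tpow, WithTop.coe_add]
  exact add_le_add le_rfl (hP i)

theorem eq_zero_of_forall_mem_coeffValGE {P : 𝕂[X]} (h : ∀ δ, P ∈ coeffValGE δ) : P = 0 :=
  Polynomial.ext fun i => eq_zero_of_forall_le_val fun δ => h δ i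

theorem div_modByMonic_mem_coeffValGE {δ : ℝ} {P : 𝕂[X]} (hP : P ∈ coeffValGE δ) (f : ℂ[X]) :
    P /ₘ f.map (algebraMap ℂ 𝕂) ∈ coeffValGE δ ∧ P %ₘ f.map (algebraMap ℂ 𝕂) ∈ coeffValGE δ := by
  -- rescale to `δ = 0`, where `valGE 0` contains `1`
  have h := coeff_div_modByMonic_map_mem (M := valGE 0) (by simp [mem_valGE])
    (by simpa using tpow_smul_mem_coeffValGE (-δ) hP : tpow (-δ) • P ∈ coeffValGE 0) f
  have hP : P = tpow δ • tpow (-δ) • P := by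
    rw [smul_smul, ← tpow_add, add_neg_cancel, tpow_zero, one_smul]
  rw [hP, smul_divByMonic, smul_modByMonic]
  exact ⟨by simpa using tpow_smul_mem_coeffValGE δ fun i => (h i).1,
    by simpa using tpow_smul_mem_coeffValGE δ fun i => (h i).2⟩

def residuePoly (P : 𝕂[X]) : ℂ[X] := ∑ i ∈ P.support, monomial i (residue (P.coeff i))

@[simp] theorem coeff_residuePoly (P : 𝕂[X]) (i : ℕ) :
    (residuePoly P).coeff i = residue (P.coeff i) := by
  rw [residuePoly, finsetSum_coeff]
  simp only [coeff_monomial, Finset.sum_ite_eq']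
  split_ifs with h
  · rfl
  · rw [notMem_support_iff.mp h]; rfl

theorem residuePoly_sub (P Q : 𝕂[X]) : residuePoly (P - Q) = residuePoly P - residuePoly Q := by
  ext; simp

theorem residuePoly_map (f : ℂ[X]) : residuePoly (f.map (algebraMap ℂ 𝕂)) = f := by
  ext; simp

theorem exists_pos_mem_coeffValGE {E : 𝕂[X]} (hE : E ∈ coeffValGE 0) (hres : residuePoly E = 0) :
    ∃ δ > 0, E ∈ coeffValGE δ := by
  have hpos (i : ℕ) : 0 < val (E.coeff i) :=
    pos_val_of_residue_eq_zero (hE i) (by simpa using congrArg (coeff · i) hres)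
  obtain ⟨δ, hδ, hδE⟩ := WithTop.exists_coe_pos_le
    ((Finset.lt_inf_iff WithTop.top_pos).mpr fun i _ => hpos i)
  refine ⟨δ, hδ, fun i => ?_⟩
  by_cases hi : i ∈ E.support
  · exact hδE.trans (Finset.inf_le hi)
  · simp [notMem_support_iff.mp hi]

theorem map_mul_mem_coeffValGE {δ : ℝ} {P : 𝕂[X]} (f : ℂ[X]) (hP : P ∈ coeffValGE δ) :
    f.map (algebraMap ℂ 𝕂) * P ∈ coeffValGE δ := by
  simpa using mul_mem_coeffValGE (map_mem_coeffValGE_zero f) hP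

theorem exists_coeffwise_limit {P : ℕ → 𝕂[X]} {a δ : ℝ} {m : ℕ} (hδ : 0 < δ)
    (hP : ∀ k : ℕ, P (k + 1) - P k ∈ coeffValGE (a + k * δ)) (hdeg : ∀ k, (P k - P 0).degree < m) :
    ∃ L : 𝕂[X], (L - P 0).degree < m ∧ ∀ K : ℕ, L - P K ∈ coeffValGE (a + K * δ) := by
  choose S hS using fun i =>
    exists_le_val_sub_sum (c := fun k => (P (k + 1) - P k).coeff i) hδ (hP · i)
  set L := P 0 + ∑ i ∈ Finset.range m, monomial i (S i)
  have hL (i : ℕ) : (L - P 0).coeff i = if i < m then S i else 0 := by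
    simp [L, finsetSum_coeff, coeff_monomial]
  refine ⟨L, (degree_lt_iff_coeff_zero _ _).mpr fun i hi => by simp [hL, not_lt.mpr hi], ?_⟩
  intro K i
  have hsum := congrArg (coeff · i) (Finset.sum_range_sub P K)
  simp only [finsetSum_coeff, coeff_sub] at hsum hS
  rw [show L - P K = (L - P 0) - (P K - P 0) by ring, coeff_sub, hL]
  split_ifs with hi
  · rw [coeff_sub, ← hsum]
    exact hS i K
  · rw [coeff_eq_zero_of_degree_lt ((hdeg K).trans_le (by exact_mod_cast not_lt.mp hi)), sub_zero]
    exact zero_mem _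

theorem exists_linear_solution {f₀ g₀ : ℂ[X]} (hf : f₀.Monic) (hcop : IsCoprime f₀ g₀) {n : ℕ}
    (hdeg : f₀.natDegree + g₀.natDegree ≤ n) (e : 𝕂[X]) :
    ∃ dF dG : 𝕂[X], f₀.map (algebraMap ℂ 𝕂) * dG + g₀.map (algebraMap ℂ 𝕂) * dF = e ∧
      dF.degree < f₀.natDegree ∧ (e.natDegree ≤ n → dG.natDegree ≤ n - f₀.natDegree) ∧
      ∀ δ, e ∈ coeffValGE δ → dF ∈ coeffValGE δ ∧ dG ∈ coeffValGE δ := by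
  obtain ⟨A, B, hAB⟩ := hcop
  set ι := algebraMap ℂ 𝕂
  have hF₀ : (f₀.map ι).Monic := hf.map ι
  set W := B.map ι * e
  set dF := W %ₘ f₀.map ι
  set dG := A.map ι * e + (W /ₘ f₀.map ι) * g₀.map ι
  have hsol : f₀.map ι * dG + g₀.map ι * dF = e := by
    calc f₀.map ι * dG + g₀.map ι * dF
        = (A * f₀ + B * g₀).map ι * e + g₀.map ι * (dF + f₀.map ι * (W /ₘ f₀.map ι) - W) := by
          simp only [dG, W, Polynomial.map_add, Polynomial.map_mul]; ring
      _ = e := by rw [hAB, modByMonic_add_div]; simp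
  have hdF : dF.degree < f₀.natDegree := by
    simpa [degree_map, degree_eq_natDegree hf.ne_zero] using degree_modByMonic_lt W hF₀
  refine ⟨dF, dG, hsol, hdF, fun he => ?_, fun δ hδ => ?_⟩
  · rcases eq_or_ne dG 0 with h0 | h0
    · simp [h0]
    have hdFn : dF.natDegree ≤ f₀.natDegree := natDegree_le_of_degree_le hdF.le
    have hG₀dF : (g₀.map ι * dF).natDegree ≤ n :=
      (natDegree_mul_le_of_le (natDegree_map ι).le hdFn).trans (by omega)
    have hrhs := natDegree_sub_le_of_le he hG₀dF
    rw [← hsol, add_sub_cancel_right, hF₀.natDegree_mul' h0, natDegree_map] at hrhs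
    omega
  · have hW := map_mul_mem_coeffValGE B hδ
    obtain ⟨hQ, hR⟩ := div_modByMonic_mem_coeffValGE hW f₀
    refine ⟨hR, add_mem (map_mul_mem_coeffValGE A hδ) ?_⟩
    rw [mul_comm]
    exact map_mul_mem_coeffValGE g₀ hQ

-- `F * G` approximates `r` to order `ε`, and `(F, G)` stays `δ`-close to the residue factors.
structure IsApproxFactor (r : 𝕂[X]) (f₀ g₀ : ℂ[X]) (n : ℕ) (δ ε : ℝ) (F G : 𝕂[X]) : Prop where
  degree_sub_lt : (F - f₀.map (algebraMap ℂ 𝕂)).degree < f₀.natDegree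
  sub_mem_left : F - f₀.map (algebraMap ℂ 𝕂) ∈ coeffValGE δ
  natDegree_le : G.natDegree ≤ n - f₀.natDegree
  sub_mem_right : G - g₀.map (algebraMap ℂ 𝕂) ∈ coeffValGE δ
  sub_mul_mem : r - F * G ∈ coeffValGE ε

namespace IsApproxFactor

variable {r : 𝕂[X]} {f₀ g₀ : ℂ[X]} {n : ℕ} {δ ε : ℝ} {F G : 𝕂[X]}

theorem monic (h : IsApproxFactor r f₀ g₀ n δ ε F G) (hf : f₀.Monic) :
    F.Monic ∧ F.natDegree = f₀.natDegree := by
  simpa using (hf.map (algebraMap ℂ 𝕂)).of_degree_sub_lt (by simpa using h.degree_sub_lt)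

theorem mem_left (h : IsApproxFactor r f₀ g₀ n δ ε F G) (hδ : 0 ≤ δ) : F ∈ coeffValGE 0 := by
  simpa using add_mem (map_mem_coeffValGE_zero f₀) (coeffValGE_antitone hδ h.sub_mem_left)

theorem mem_right (h : IsApproxFactor r f₀ g₀ n δ ε F G) (hδ : 0 ≤ δ) : G ∈ coeffValGE 0 := by
  simpa using add_mem (map_mem_coeffValGE_zero g₀) (coeffValGE_antitone hδ h.sub_mem_right)

theorem natDegree_sub_mul_le (h : IsApproxFactor r f₀ g₀ n δ ε F G) (hf : f₀.Monic)
    (hr : r.natDegree ≤ n) (hn : f₀.natDegree ≤ n) : (r - F * G).natDegree ≤ n := by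
  have hFG := natDegree_mul_le_of_le (h.monic hf).2.le h.natDegree_le
  exact (natDegree_sub_le_of_le hr (hFG.trans (by omega))).trans (max_self n).le

-- The corrections solve the linearised equation, so only quadratic terms remain in the error.
theorem step (h : IsApproxFactor r f₀ g₀ n δ ε F G) (hδε : δ ≤ ε) {dF dG : 𝕂[X]}
    (hsol : f₀.map (algebraMap ℂ 𝕂) * dG + g₀.map (algebraMap ℂ 𝕂) * dF = r - F * G)
    (hdF : dF.degree < f₀.natDegree) (hdG : dG.natDegree ≤ n - f₀.natDegree)
    (hdFε : dF ∈ coeffValGE ε) (hdGε : dG ∈ coeffValGE ε) :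
    IsApproxFactor r f₀ g₀ n δ (ε + δ) (F + dF) (G + dG) := by
  set F₀ := f₀.map (algebraMap ℂ 𝕂)
  set G₀ := g₀.map (algebraMap ℂ 𝕂)
  have herr : r - (F + dF) * (G + dG) = -((F - F₀) * dG + (G - G₀) * dF + dF * dG) := by
    linear_combination -hsol
  refine ⟨?_, ?_, ?_, ?_, ?_⟩
  · rw [add_sub_right_comm]
    exact (degree_add_le _ _).trans_lt (max_lt h.degree_sub_lt hdF)
  · rw [add_sub_right_comm]
    exact add_mem h.sub_mem_left (coeffValGE_antitone hδε hdFε)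
  · exact (natDegree_add_le _ _).trans (max_le h.natDegree_le hdG)
  · rw [add_sub_right_comm]
    exact add_mem h.sub_mem_right (coeffValGE_antitone hδε hdGε)
  · rw [herr]
    have hεδ : ε + δ ≤ ε + ε := by linarith
    refine neg_mem (add_mem (add_mem ?_ ?_) (coeffValGE_antitone hεδ ?_))
    · simpa [add_comm] using mul_mem_coeffValGE h.sub_mem_left hdGε
    · simpa [add_comm] using mul_mem_coeffValGE h.sub_mem_right hdFε
    · exact mul_mem_coeffValGE hdFε hdGε

end IsApproxFactor

theorem eq_mul_of_forall_approx {r F G : 𝕂[X]}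
    (h : ∀ ρ : ℝ, 0 ≤ ρ → ∃ F' G' : 𝕂[X], F' ∈ coeffValGE 0 ∧ G' ∈ coeffValGE 0 ∧
      r - F' * G' ∈ coeffValGE ρ ∧ F - F' ∈ coeffValGE ρ ∧ G - G' ∈ coeffValGE ρ) :
    r = F * G := by
  rw [← sub_eq_zero]
  refine eq_zero_of_forall_mem_coeffValGE fun ρ => coeffValGE_antitone (le_max_left ρ 0) ?_
  obtain ⟨F', G', hF', hG', hr, hF, hG⟩ := h (max ρ 0) (le_max_right ρ 0)
  have : r - F * G = r - F' * G' - (F' * (G - G') + (F - F') * G' + (F - F') * (G - G')) := by ring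
  rw [this]
  refine sub_mem hr (add_mem (add_mem ?_ ?_) (coeffValGE_antitone ?_ (mul_mem_coeffValGE hF hG)))
  · simpa using mul_mem_coeffValGE hF' hG
  · simpa using mul_mem_coeffValGE hF hG'
  · linarith [le_max_right ρ 0]

theorem exists_approxFactor_seq {r : 𝕂[X]} {f₀ g₀ : ℂ[X]} {n : ℕ} {δ : ℝ} (hf : f₀.Monic)
    (hcop : IsCoprime f₀ g₀) (hdeg : f₀.natDegree + g₀.natDegree ≤ n) (hr : r.natDegree ≤ n)
    (hδ : 0 ≤ δ) (hrδ : r - (f₀ * g₀).map (algebraMap ℂ 𝕂) ∈ coeffValGE δ) :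
    ∃ F G : ℕ → 𝕂[X], F 0 = f₀.map (algebraMap ℂ 𝕂) ∧
      ∀ k : ℕ, IsApproxFactor r f₀ g₀ n δ (δ + k * δ) (F k) (G k) ∧
        F (k + 1) - F k ∈ coeffValGE (δ + k * δ) ∧ G (k + 1) - G k ∈ coeffValGE (δ + k * δ) := by
  set ι := algebraMap ℂ 𝕂
  choose dF dG hsol using exists_linear_solution hf hcop hdeg
  set u : ℕ → 𝕂[X] × 𝕂[X] := fun k =>
    (fun FG => (FG.1 + dF (r - FG.1 * FG.2), FG.2 + dG (r - FG.1 * FG.2)))^[k] (f₀.map ι, g₀.map ι)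
  have hu_succ (k : ℕ) : u (k + 1) = ((u k).1 + dF (r - (u k).1 * (u k).2),
      (u k).2 + dG (r - (u k).1 * (u k).2)) :=
    Function.iterate_succ_apply' _ k _
  have hu (k : ℕ) : IsApproxFactor r f₀ g₀ n δ (δ + k * δ) (u k).1 (u k).2 := by
    induction k with
    | zero =>
      refine ⟨by simp [u, ι], by simp [u, ι], ?_, by simp [u, ι], ?_⟩
      · simp only [u, Function.iterate_zero, id, natDegree_map]
        omega
      · simpa [u, ← Polynomial.map_mul] using hrδ
    | succ k ih =>
      obtain ⟨h₁, h₂, h₃, h₄⟩ := hsol (r - (u k).1 * (u k).2)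
      have hk : 0 ≤ k * δ := by positivity
      have := ih.step (by linarith) h₁ h₂ (h₃ (ih.natDegree_sub_mul_le hf hr (by omega)))
        (h₄ _ ih.sub_mul_mem).1 (h₄ _ ih.sub_mul_mem).2
      rw [hu_succ]
      convert this using 1
      push_cast; ring
  refine ⟨fun k => (u k).1, fun k => (u k).2, rfl, fun k => ⟨hu k, ?_, ?_⟩⟩
  · simpa [hu_succ] using ((hsol _).2.2.2 _ (hu k).sub_mul_mem).1
  · simpa [hu_succ] using ((hsol _).2.2.2 _ (hu k).sub_mul_mem).2

-- Hensel's lemma, by Newton iteration: each correction gains `δ` in valuation, so the iterates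
-- converge coefficientwise.
theorem exists_factorization_lift {r : 𝕂[X]} {f₀ g₀ : ℂ[X]} {n : ℕ} {δ : ℝ} (hf : f₀.Monic)
    (hcop : IsCoprime f₀ g₀) (hdeg : f₀.natDegree + g₀.natDegree ≤ n) (hr : r.natDegree ≤ n)
    (hδ : 0 < δ) (hrδ : r - (f₀ * g₀).map (algebraMap ℂ 𝕂) ∈ coeffValGE δ) :
    ∃ F G : 𝕂[X], r = F * G ∧ F.Monic ∧ F.natDegree = f₀.natDegree := by
  obtain ⟨F, G, hF0, hFG⟩ := exists_approxFactor_seq hf hcop hdeg hr hδ.le hrδ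
  obtain ⟨LF, hLF0, hLF⟩ := exists_coeffwise_limit hδ (fun k => (hFG k).2.1)
    (fun k => hF0 ▸ (hFG k).1.degree_sub_lt)
  have hGdeg (k : ℕ) : (G k - G 0).degree < ↑(n - f₀.natDegree + 1) :=
    degree_le_natDegree.trans_lt <| by
      exact_mod_cast Nat.lt_succ_of_le <| natDegree_sub_le_of_le (hFG k).1.natDegree_le
        (hFG 0).1.natDegree_le |>.trans (max_self _).le
  obtain ⟨LG, -, hLG⟩ := exists_coeffwise_limit hδ (fun k => (hFG k).2.2) hGdeg
  refine ⟨LF, LG, eq_mul_of_forall_approx fun ρ _ => ?_, ?_⟩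
  · obtain ⟨K, hK⟩ := exists_nat_ge (ρ / δ)
    have hρK : ρ ≤ δ + K * δ := by rw [div_le_iff₀ hδ] at hK; linarith
    exact ⟨F K, G K, (hFG K).1.mem_left hδ.le, (hFG K).1.mem_right hδ.le,
      coeffValGE_antitone hρK (hFG K).1.sub_mul_mem, coeffValGE_antitone hρK (hLF K),
      coeffValGE_antitone hρK (hLG K)⟩
  · rw [hF0] at hLF0
    simpa using (hf.map (algebraMap ℂ 𝕂)).of_degree_sub_lt (by simpa using hLF0)

-- The lower-left edge of the Newton polygon of `P`: slope `μ`, touching at `0` and at some `i > 0`.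
theorem exists_newton_slope {P : 𝕂[X]} (hP : 0 < P.natDegree) {β : ℝ}
    (hβ : val (P.coeff 0) = β) :
    ∃ μ : ℝ, (∀ i : ℕ, ((β - i * μ : ℝ) : WithTop ℝ) ≤ val (P.coeff i)) ∧
      ∃ i, 0 < i ∧ val (P.coeff i) = ((β - i * μ : ℝ) : WithTop ℝ) := by
  set ord : ℕ → ℝ := fun i => ((P.coeff i : 𝕂) : ℂ⟦ℝ⟧).order
  have hord {i : ℕ} (hi : i ∈ P.support) : val (P.coeff i) = ord i :=
    val_eq_order (mem_support_iff.mp hi)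
  have hI : (P.support.filter (0 < ·)).Nonempty :=
    ⟨P.natDegree, Finset.mem_filter.mpr ⟨natDegree_mem_support_of_nonzero
      (ne_zero_of_natDegree_gt hP), hP⟩⟩
  obtain ⟨i₀, hi₀, hmax⟩ := (P.support.filter (0 < ·)).exists_max_image
    (fun i => (β - ord i) / i) hI
  rw [Finset.mem_filter] at hi₀
  refine ⟨(β - ord i₀) / i₀, fun i => ?_, i₀, hi₀.2, ?_⟩
  · by_cases hi : i ∈ P.support
    · rcases Nat.eq_zero_or_pos i with rfl | hi0
      · simp [hβ]
      have := hmax i (Finset.mem_filter.mpr ⟨hi, hi0⟩)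
      rw [div_le_div_iff₀ (by exact_mod_cast hi0) (by exact_mod_cast hi₀.2)] at this
      rw [hord hi, WithTop.coe_le_coe]
      have hi0' : (0 : ℝ) < i₀ := by exact_mod_cast hi₀.2
      have h2 : β - ord i ≤ (β - ord i₀) * i / i₀ := by rw [le_div_iff₀ hi0']; linarith
      have h3 : (i : ℝ) * ((β - ord i₀) / i₀) = (β - ord i₀) * i / i₀ := by ring
      linarith
    · simp [notMem_support_iff.mp hi]
  · rw [hord hi₀.1, WithTop.coe_eq_coe]
    have : (i₀ : ℝ) ≠ 0 := by exact_mod_cast hi₀.2.ne'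
    field_simp
    ring

def rescale (β μ : ℝ) (P : 𝕂[X]) : 𝕂[X] := C (tpow (-β)) * P.comp (C (tpow μ) * X)

theorem coeff_rescale (β μ : ℝ) (P : 𝕂[X]) (i : ℕ) :
    (rescale β μ P).coeff i = tpow (i * μ - β) * P.coeff i := by
  rw [rescale, coeff_C_mul, comp_C_mul_X_coeff, tpow_pow, sub_eq_neg_add, tpow_add]
  ring

theorem val_coeff_rescale (β μ : ℝ) (P : 𝕂[X]) (i : ℕ) :
    val ((rescale β μ P).coeff i) = ((i * μ - β : ℝ) : WithTop ℝ) + val (P.coeff i) := by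
  rw [coeff_rescale, val.map_mul, val_tpow]

theorem natDegree_rescale_le (β μ : ℝ) (P : 𝕂[X]) : (rescale β μ P).natDegree ≤ P.natDegree :=
  natDegree_le_iff_coeff_eq_zero.mpr fun i hi => by
    rw [coeff_rescale, coeff_eq_zero_of_natDegree_lt hi, mul_zero]

theorem IsRoot.of_rescale {β μ : ℝ} {P : 𝕂[X]} {y : 𝕂} (h : (rescale β μ P).IsRoot y) :
    P.IsRoot (tpow μ * y) := by
  simpa [rescale, IsRoot, eval_comp, tpow_ne_zero] using h

theorem exists_monic_factor_of_coeff_sub_one_eq_zero {P : 𝕂[X]}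
    (hsub : P.coeff (P.natDegree - 1) = 0) (h0 : P.coeff 0 ≠ 0) :
    ∃ F : 𝕂[X], F.Monic ∧ 0 < F.natDegree ∧ F.natDegree < P.natDegree ∧
      ∀ y, F.IsRoot y → ∃ z, P.IsRoot z := by
  set n := P.natDegree
  have hn : 0 < n := Nat.pos_of_ne_zero fun h => h0 (by simpa [h] using hsub)
  obtain ⟨μ, hμ, i₀, hi₀, hi₀μ⟩ := exists_newton_slope hn (val_eq_order h0)
  set β := ((P.coeff 0 : 𝕂) : ℂ⟦ℝ⟧).order
  -- `r(X) = t^(-β) P(t^μ X)` has integral coefficients, with unit coefficients at `0` and `i₀`.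
  set r := rescale β μ P
  have hr : r ∈ coeffValGE 0 := fun i => by
    rw [mem_valGE, val_coeff_rescale]
    calc ((0 : ℝ) : WithTop ℝ)
      _ = ((i * μ - β : ℝ) : WithTop ℝ) + ((β - i * μ : ℝ) : WithTop ℝ) := by
        rw [← WithTop.coe_add]; congr 1; ring
      _ ≤ _ := add_le_add le_rfl (hμ i)
  have hunit {i : ℕ} (h : val (P.coeff i) = ((β - i * μ : ℝ) : WithTop ℝ)) :
      (residuePoly r).coeff i ≠ 0 := by
    rw [coeff_residuePoly]
    exact residue_ne_zero_of_val_eq_zero (by rw [val_coeff_rescale, h, ← WithTop.coe_add]; simp)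
  have hR0 : (residuePoly r).coeff 0 ≠ 0 := hunit (by simpa using val_eq_order h0)
  have hRn : (residuePoly r).natDegree ≤ n := natDegree_le_iff_coeff_eq_zero.mpr fun i hi => by
    rw [coeff_residuePoly, coeff_eq_zero_of_natDegree_lt ((natDegree_rescale_le β μ P).trans_lt hi),
      residue_zero]
  have hRsub : (residuePoly r).coeff (n - 1) = 0 := by simp [r, coeff_rescale, n, hsub]
  obtain ⟨f₀, g₀, hf, hcop, hRfg, hpos, hlt⟩ := exists_coprime_factorization
    (hi₀.trans_le (le_natDegree_of_ne_zero (hunit hi₀μ))) hRn hR0 hRsub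
  obtain ⟨δ, hδ, hrδ⟩ := exists_pos_mem_coeffValGE (sub_mem hr (map_mem_coeffValGE_zero (f₀ * g₀)))
    (by rw [residuePoly_sub, residuePoly_map, ← hRfg, sub_self])
  have hfg : f₀.natDegree + g₀.natDegree ≤ n := by
    have hR : residuePoly r ≠ 0 := fun h => hR0 (by simp [h])
    rwa [← natDegree_mul hf.ne_zero (right_ne_zero_of_mul (hRfg ▸ hR)), ← hRfg]
  obtain ⟨F, G, hrFG, hF, hFdeg⟩ := exists_factorization_lift hf hcop hfg
    (natDegree_rescale_le β μ P) hδ hrδ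
  refine ⟨F, hF, hFdeg ▸ hpos, hFdeg ▸ hlt, fun y hy => ⟨tpow μ * y, IsRoot.of_rescale (β := β) ?_⟩⟩
  rw [IsRoot.def, hrFG, eval_mul, hy.eq_zero, zero_mul]

theorem exists_root_of_monic {q : 𝕂[X]} (hq : q.Monic) (hdeg : 0 < q.natDegree) :
    ∃ y, q.IsRoot y := by
  induction hn : q.natDegree using Nat.strong_induction_on generalizing q with
  | _ n ih =>
  -- Tschirnhaus shift: kill the subleading coefficient
  set s : 𝕂 := -q.coeff (n - 1) / n
  set P := taylor s q
  have hPn : P.natDegree = n := (natDegree_taylor q s).trans hn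
  have hsub : P.coeff (P.natDegree - 1) = 0 := by
    have hn0 : (n : 𝕂) ≠ 0 := Nat.cast_ne_zero.mpr (by omega)
    rw [hPn, ← hn, coeff_taylor_natDegree_sub_one hq hdeg, hn]
    show q.coeff (n - 1) + n * (-q.coeff (n - 1) / n) = 0
    field_simp
    ring
  suffices ∃ z, P.IsRoot z by
    obtain ⟨z, hz⟩ := this
    exact ⟨z + s, by simpa [P, IsRoot, taylor_eval] using hz⟩
  by_cases h0 : P.coeff 0 = 0
  · exact ⟨0, by rwa [IsRoot, ← coeff_zero_eq_eval_zero]⟩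
  obtain ⟨F, hF, hF0, hFn, hroots⟩ := exists_monic_factor_of_coeff_sub_one_eq_zero hsub h0
  obtain ⟨y, hy⟩ := ih F.natDegree (hPn ▸ hFn) hF hF0 rfl
  exact hroots y hy

instance : IsAlgClosed 𝕂 :=
  IsAlgClosed.of_exists_root 𝕂 fun _ hp hirr => exists_root_of_monic hp hirr.natDegree_pos

end GenPuiseux

end

/-- The field `𝕂` of generalised Puiseux series over `ℂ` is algebraically closed:
every non-constant polynomial with coefficients in `𝕂` has a root in `𝕂`. -/
theorem genPuiseux_algClosed (p : Polynomial (HahnSeries ℝ ℂ)) (hdeg : 0 < p.degree)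
    (hcoeff : ∀ i, IsGenPuiseux (p.coeff i)) :
    ∃ y : HahnSeries ℝ ℂ, IsGenPuiseux y ∧ Polynomial.eval y p = 0 := by
  obtain ⟨q, rfl⟩ : ∃ q : GenPuiseux.genPuiseux[X], q.map (algebraMap _ _) = p :=
    (mem_lifts p).mp ((lifts_iff_coeff_lifts p).mpr fun i => ⟨⟨_, hcoeff i⟩, rfl⟩)
  rw [degree_map] at hdeg
  obtain ⟨y, hy⟩ := IsAlgClosed.exists_root q hdeg.ne'
  exact ⟨y, y.2, (eval_map_apply (algebraMap _ _) y).trans (by rw [hy.eq_zero, map_zero])⟩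
end

section
/- The field 𝕂 of generalised Puiseux series over ℂ is complete with respect to the norm |f| = exp(−val(f)) (with |0| = 0): every Cauchy sequence in 𝕂 with respect to |·| converges to an element of 𝕂. -/
open Classical

/-- The norm `|f| = exp (-val f)` on generalised Puiseux series, with `|0| = 0`. -/
noncomputable def gpNorm (f : HahnSeries ℝ ℂ) : ℝ :=
  if f = 0 then 0 else Real.exp (-f.order)

/-!
Since `|a - b| < exp (-M)` says exactly that `a` and `b` have the same coefficients at all
exponents `≤ M`, a Cauchy sequence has, below every `M`, eventually constant coefficients.
The limit takes these stable coefficients; below each `M` it agrees with a single term of the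
sequence, so its support meets `(-∞, M]` in a finite set, and the sequence converges to it.
-/

open Set

theorem Set.isPWO_of_finite_inter_Iic {Γ : Type*} [LinearOrder Γ] {S : Set Γ}
    (h : ∀ M, (S ∩ Iic M).Finite) : S.IsPWO := by
  refine isPWO_iff_isWF.mpr (isWF_iff_no_descending_seq.mpr fun u hu hmem => ?_)
  have hsub : range u ⊆ S ∩ Iic (u 0) := by
    rintro _ ⟨n, rfl⟩
    exact ⟨hmem n, hu.antitone n.zero_le⟩
  exact infinite_range_of_injective hu.injective ((h (u 0)).subset hsub)

theorem exists_eventually_eqOn_Iic {Γ R : Type*} [Preorder Γ] (u : ℕ → Γ → R)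
    (hu : ∀ M, ∃ K, ∀ n ≥ K, ∀ m ≥ K, EqOn (u n) (u m) (Iic M)) :
    ∃ v : Γ → R, ∀ M, ∃ K, ∀ n ≥ K, EqOn (u n) v (Iic M) := by
  choose K hK using hu
  refine ⟨fun α => u (K α) α, fun M => ⟨K M, fun n hn α hα => ?_⟩⟩
  calc u n α = u (max n (K α)) α := hK M n hn _ (hn.trans (le_max_left _ _)) hα
    _ = u (K α) α := hK α _ (le_max_right _ _) _ le_rfl le_rfl

theorem gpNorm_lt_exp_neg_iff {g : HahnSeries ℝ ℂ} {M : ℝ} :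
    gpNorm g < Real.exp (-M) ↔ ∀ α ≤ M, g.coeff α = 0 := by
  by_cases hg : g = 0
  · simp [gpNorm, hg, Real.exp_pos]
  rw [gpNorm, if_neg hg, Real.exp_lt_exp, neg_lt_neg_iff]
  refine ⟨fun hM α hα => HahnSeries.coeff_eq_zero_of_lt_order (hα.trans_lt hM), fun h => ?_⟩
  by_contra! hle
  exact hg (HahnSeries.coeff_order_eq_zero.mp (h _ hle))

theorem gpNorm_sub_lt_exp_neg_iff {a b : HahnSeries ℝ ℂ} {M : ℝ} :
    gpNorm (a - b) < Real.exp (-M) ↔ EqOn a.coeff b.coeff (Iic M) := by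
  simp only [gpNorm_lt_exp_neg_iff, HahnSeries.coeff_sub, sub_eq_zero]
  rfl

/-- The field `𝕂` of generalised Puiseux series over `ℂ` is complete with respect to the
norm `|f| = exp (-val f)`: every Cauchy sequence in `𝕂` converges to an element of `𝕂`. -/
theorem genPuiseux_complete (f : ℕ → HahnSeries ℝ ℂ) (hf : ∀ n, IsGenPuiseux (f n))
    (hcauchy : ∀ ε : ℝ, 0 < ε → ∃ N : ℕ, ∀ n ≥ N, ∀ m ≥ N, gpNorm (f n - f m) < ε) :
    ∃ g : HahnSeries ℝ ℂ, IsGenPuiseux g ∧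
      ∀ ε : ℝ, 0 < ε → ∃ N : ℕ, ∀ n ≥ N, gpNorm (f n - g) < ε := by
  have hstable : ∀ M, ∃ K, ∀ n ≥ K, ∀ m ≥ K, EqOn (f n).coeff (f m).coeff (Iic M) :=
    fun M => (hcauchy _ (Real.exp_pos (-M))).imp fun _ hK n hn m hm =>
      gpNorm_sub_lt_exp_neg_iff.mp (hK n hn m hm)
  obtain ⟨c, hc⟩ := exists_eventually_eqOn_Iic (fun n => (f n).coeff) hstable
  have hsupp : ∀ M, (Function.support c ∩ Iic M).Finite := fun M => by
    obtain ⟨K, hK⟩ := hc M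
    refine (hf K M).subset fun α ⟨hα, hαM⟩ => ⟨?_, hαM⟩
    rwa [HahnSeries.mem_support, hK K le_rfl hαM]
  let g : HahnSeries ℝ ℂ := ⟨c, isPWO_of_finite_inter_Iic hsupp⟩
  refine ⟨g, hsupp, fun ε hε => ?_⟩
  obtain ⟨M, hM⟩ := (Real.tendsto_exp_neg_atTop_nhds_zero.eventually (gt_mem_nhds hε)).exists
  obtain ⟨K, hK⟩ := hc M
  exact ⟨K, fun n hn => (gpNorm_sub_lt_exp_neg_iff.mpr (hK n hn)).trans hM⟩
end

section
/- Let k be a field of characteristic p > 0 and let c ∈ k satisfy c^p = c (i.e. c lies in the prime field). Then the Hahn series ȳ = −c + Σ_{i=1}^∞ t^{−1/pⁱ} in HahnSeries ℝ k (the series with coefficient 1 at each exponent −1/pⁱ for i ≥ 1 and coefficient −c at exponent 0) satisfies the Artin–Schreier equation ȳ^p − ȳ − t^{−1} = 0, where t^{−1} denotes the single-term Hahn series with coefficient 1 at exponent −1. -/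
open Classical

/-- The Hahn series `ȳ = -c + ∑_{i ≥ 1} t^{-1/pⁱ}` over a field `k`: the coefficient at
exponent `0` is `-c`, the coefficient at each exponent `-1/pⁱ` (for `i ≥ 1`) is `1`, and
all other coefficients vanish.  Its support is well-ordered. -/
noncomputable def artinSchreierRoot (k : Type*) [Field k] (p : ℕ) (c : k) : HahnSeries ℝ k where
  coeff x :=
    if x = 0 then -c
    else if ∃ i : ℕ, 1 ≤ i ∧ x = -(1 / (p : ℝ) ^ i) then 1 else 0
  isPWO_support' := by
    apply Set.IsPWO.mono
      (t := insert (0 : ℝ) (Set.range fun i : ℕ => -(1 / (p : ℝ) ^ (i + 1))))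
    · apply Set.IsPWO.insert
      have huniv : (Set.univ : Set ℕ).IsPWO :=
        (Set.isWF_univ_iff.2 inferInstance).isPWO
      have : (Set.range fun i : ℕ => -(1 / (p : ℝ) ^ (i + 1)))
          = (fun i : ℕ => -(1 / (p : ℝ) ^ (i + 1))) '' Set.univ := by
        rw [Set.image_univ]
      rw [this]
      apply huniv.image_of_monotone
      intro i j hij
      rcases Nat.lt_or_ge p 2 with hp | hp
      · interval_cases p <;> simp
      · have hp1 : (1 : ℝ) ≤ (p : ℝ) := by exact_mod_cast Nat.one_le_of_lt hp
        have := one_div_pow_le_one_div_pow_of_le hp1 (Nat.add_le_add_right hij 1)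
        simpa using neg_le_neg this
    · intro x hx
      simp only [Function.mem_support] at hx
      by_cases h0 : x = 0
      · rw [h0]; exact Set.mem_insert 0 _
      · rw [if_neg h0] at hx
        by_cases h1 : ∃ i : ℕ, 1 ≤ i ∧ x = -(1 / (p : ℝ) ^ i)
        · obtain ⟨i, hi1, hxi⟩ := h1
          refine Set.mem_insert_of_mem _ ⟨i - 1, ?_⟩
          simp only
          rw [Nat.sub_add_cancel hi1, ← hxi]
        · rw [if_neg h1] at hx; exact absurd rfl hx

/-! Write `ȳ = Pₙ + Rₙ`, where `Pₙ = -c + ∑_{i=1}^{n} t^{-1/pⁱ}` is a finite sum and the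
remainder `Rₙ` is supported in `(-1/pⁿ, 0)`. Frobenius is additive and `c ^ p = c`, so
`P_{n+1} ^ p = t⁻¹ + Pₙ`, hence `ȳ ^ p - ȳ - t⁻¹ = R_{n+1} ^ p - Rₙ`. The right-hand side is
supported in `(-1/pⁿ, 0)`, and as this holds for every `n` the left-hand side vanishes. -/

open Set

namespace HahnSeries

theorem eq_zero_of_forall_support_subset_Ioo {R : Type*} [Zero R] {p : ℕ}
    (hp : 1 < p) {x : R⟦ℝ⟧} (h : ∀ n : ℕ, x.support ⊆ Ioo (-(1 / (p : ℝ) ^ n)) 0) :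
    x = 0 := by
  ext g
  by_contra hg
  have hg0 : 0 < -g := neg_pos.2 (h 0 hg).2
  have hp' : (p : ℝ)⁻¹ < 1 := inv_lt_one_of_one_lt₀ (by exact_mod_cast hp)
  obtain ⟨n, hn⟩ := exists_pow_lt_of_lt_one hg0 hp'
  have := (h n hg).1
  rw [one_div, ← inv_pow] at this
  linarith

variable {Γ R : Type*} [AddCommMonoid Γ] [PartialOrder Γ] [IsOrderedCancelAddMonoid Γ] [Semiring R]

instance instCharP (p : ℕ) [CharP R p] : CharP R⟦Γ⟧ p :=
  charP_of_injective_ringHom C_injective p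

theorem support_pow_subset_Ioo {x : R⟦Γ⟧} {a b : Γ} (h : x.support ⊆ Ioo a b) {m : ℕ}
    (hm : m ≠ 0) : (x ^ m).support ⊆ Ioo (m • a) (m • b) := by
  induction m with
  | zero => exact absurd rfl hm
  | succ m ih =>
    rcases eq_or_ne m 0 with rfl | hm
    · simpa using h
    intro g hg
    obtain ⟨u, hu, v, hv, rfl⟩ := support_mul_subset (pow_succ x m ▸ hg)
    obtain ⟨hau, hub⟩ := ih hm hu
    obtain ⟨hav, hvb⟩ := h hv
    rw [succ_nsmul, succ_nsmul]
    exact ⟨add_lt_add hau hav, add_lt_add hub hvb⟩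

end HahnSeries

open HahnSeries

theorem strictMono_neg_one_div_pow {p : ℕ} (hp : 1 < p) :
    StrictMono fun i : ℕ => -(1 / (p : ℝ) ^ i) :=
  (one_div_pow_strictAnti (by exact_mod_cast hp)).neg

theorem nsmul_neg_one_div_pow_succ {p : ℕ} (hp : p ≠ 0) (i : ℕ) :
    p • -(1 / (p : ℝ) ^ (i + 1)) = -(1 / (p : ℝ) ^ i) := by
  rw [nsmul_eq_mul, pow_succ]
  field_simp

noncomputable def artinSchreierPartial (k : Type*) [Field k] (p : ℕ) (c : k) (n : ℕ) :
    HahnSeries ℝ k :=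
  single 0 (-c) + ∑ i ∈ Finset.range n, single (-(1 / (p : ℝ) ^ (i + 1))) 1

section

variable {k : Type*} [Field k] {p : ℕ}

theorem coeff_artinSchreierRoot_sub_partial (hp : 1 < p) (c : k) (n : ℕ) (x : ℝ) :
    (artinSchreierRoot k p c - artinSchreierPartial k p c n).coeff x =
      if ∃ i : ℕ, n + 1 ≤ i ∧ x = -(1 / (p : ℝ) ^ i) then 1 else 0 := by
  have hinj := (strictMono_neg_one_div_pow hp).injective
  induction n with
  | zero =>
    simp only [artinSchreierPartial, Finset.range_zero, Finset.sum_empty, add_zero, zero_add,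
      coeff_sub, coeff_single]
    show (if x = 0 then -c else if ∃ i : ℕ, 1 ≤ i ∧ x = -(1 / (p : ℝ) ^ i) then 1 else 0) - _ = _
    by_cases h0 : x = 0
    · simp [h0, show p ≠ 0 by omega]
    · simp [h0]
  | succ n ih =>
    rw [artinSchreierPartial, Finset.sum_range_succ, ← add_assoc, ← artinSchreierPartial,
      ← sub_sub, coeff_sub, ih, coeff_single]
    by_cases hx : x = -(1 / (p : ℝ) ^ (n + 1))
    · rw [if_pos ⟨n + 1, le_rfl, hx⟩, if_pos hx, sub_self, if_neg]
      rintro ⟨i, hi, hxi⟩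
      have := hinj (hx.symm.trans hxi)
      omega
    · rw [if_neg hx, sub_zero]
      refine if_congr ⟨?_, fun ⟨i, hi, hxi⟩ => ⟨i, by omega, hxi⟩⟩ rfl rfl
      rintro ⟨i, hi, rfl⟩
      rcases hi.eq_or_lt with rfl | hi
      · exact absurd rfl hx
      · exact ⟨i, hi, rfl⟩

theorem support_artinSchreierRoot_sub_partial (hp : 1 < p) (c : k) (n : ℕ) :
    (artinSchreierRoot k p c - artinSchreierPartial k p c n).support ⊆
      Ioo (-(1 / (p : ℝ) ^ n)) 0 := by
  intro x hx
  rw [mem_support, coeff_artinSchreierRoot_sub_partial hp, ite_ne_right_iff] at hx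
  obtain ⟨⟨i, hi, rfl⟩, -⟩ := hx
  exact ⟨strictMono_neg_one_div_pow hp (by omega), by simp; positivity⟩

theorem artinSchreierPartial_succ_pow [Fact p.Prime] [CharP k p] {c : k} (hc : c ^ p = c)
    (n : ℕ) :
    artinSchreierPartial k p c (n + 1) ^ p = single (-1) 1 + artinSchreierPartial k p c n := by
  have hp : p ≠ 0 := (Fact.out : p.Prime).ne_zero
  have hc' : (-c) ^ p = -c := by rw [neg_pow, neg_one_pow_char, hc, neg_one_mul]
  simp only [artinSchreierPartial, add_pow_char, sum_pow_char, single_pow, one_pow, hc',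
    smul_zero, nsmul_neg_one_div_pow_succ hp, Finset.sum_range_succ' _ n, pow_zero, div_one]
  abel

end

/-- Let `k` be a field of characteristic `p > 0` and let `c ∈ k` satisfy `c ^ p = c`
(i.e. `c` lies in the prime field).  Then the Hahn series `ȳ = -c + ∑_{i ≥ 1} t^{-1/pⁱ}`
satisfies the Artin–Schreier equation `ȳ ^ p - ȳ - t⁻¹ = 0`, where `t⁻¹` is the
single-term Hahn series with coefficient `1` at exponent `-1`. -/
theorem artinSchreierRoot_is_root (k : Type*) [Field k] (p : ℕ) [Fact p.Prime] [CharP k p]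
    (c : k) (hc : c ^ p = c) :
    artinSchreierRoot k p c ^ p - artinSchreierRoot k p c
      - HahnSeries.single (-1 : ℝ) (1 : k) = 0 := by
  have hp := (Fact.out : p.Prime).one_lt
  set y := artinSchreierRoot k p c
  have hsplit (n : ℕ) : y ^ p - y - single (-1) 1 =
      (y - artinSchreierPartial k p c (n + 1)) ^ p - (y - artinSchreierPartial k p c n) := by
    conv_lhs => rw [← add_sub_cancel (artinSchreierPartial k p c (n + 1)) y, add_pow_char,
      artinSchreierPartial_succ_pow hc]
    abel
  refine eq_zero_of_forall_support_subset_Ioo hp fun n ↦ ?_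
  rw [hsplit n]
  refine (support_sub_subset _ _).trans (union_subset ?_ ?_)
  · refine (support_pow_subset_Ioo (support_artinSchreierRoot_sub_partial hp c (n + 1))
      (by omega)).trans ?_
    rw [nsmul_neg_one_div_pow_succ (by omega), smul_zero]
  · exact support_artinSchreierRoot_sub_partial hp c n
end

section
/- Let k be an algebraically closed field of characteristic p > 0. Then the field 𝕂_k of generalised Puiseux series over k is not algebraically closed: the Artin–Schreier polynomial F = y^p − y − t^{−1}, whose coefficients lie in 𝕂_k, has no root in 𝕂_k. -/
/-- A Hahn series `f : HahnSeries ℝ k` over a field `k` is a *generalised Puiseux series*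
(i.e. lies in `𝕂_k`) if its support has finite intersection with `(-∞, M]` for every `M`. -/
def IsGenPuiseuxOver (k : Type*) [Zero k] (f : HahnSeries ℝ k) : Prop :=
  ∀ M : ℝ, (f.support ∩ Set.Iic M).Finite

/-!
If `z ^ p - z = a t^c` with `c < 0` and `a ≠ 0`, comparing lowest-order terms forces
`ord z = c / p` with leading coefficient `b`, `b ^ p = a`. Since Frobenius is additive,
`z - b t^(c/p)` satisfies the same kind of equation with `c` replaced by `c / p`. Iterating,
a root of `y ^ p - y = t⁻¹` has nonzero coefficients at all exponents `-1 / p ^ n`, `n ≥ 1`,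
which accumulate at `0`, so it is not a generalised Puiseux series.
-/

namespace HahnSeries

variable {Γ R : Type*}

theorem leadingCoeff_pow [AddCommMonoid Γ] [LinearOrder Γ] [IsOrderedCancelAddMonoid Γ]
    [Semiring R] [NoZeroDivisors R] (x : HahnSeries Γ R) (n : ℕ) :
    (x ^ n).leadingCoeff = x.leadingCoeff ^ n := by
  induction n <;> simp [pow_succ, *]

instance charP [AddCommMonoid Γ] [PartialOrder Γ] [IsOrderedCancelAddMonoid Γ]
    [Semiring R] (p : ℕ) [CharP R p] : CharP (HahnSeries Γ R) p :=
  charP_of_injective_ringHom C_injective p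

section ArtinSchreier

variable [AddCommGroup Γ] [LinearOrder Γ] [IsOrderedAddMonoid Γ]

theorem ne_zero_of_pow_sub_self_eq_single [Ring R] {n : ℕ} (hn : n ≠ 0) {c : Γ} {a : R}
    (ha : a ≠ 0) {z : HahnSeries Γ R} (hz : z ^ n - z = single c a) : z ≠ 0 := by
  rintro rfl
  rw [zero_pow hn, sub_zero, eq_comm, single_eq_zero_iff] at hz
  exact ha hz

theorem nsmul_order_eq_and_leadingCoeff_pow_eq_of_pow_sub_self_eq_single [Ring R]
    [NoZeroDivisors R] {n : ℕ} (hn : 1 < n) {c : Γ} (hc : c < 0) {a : R} (ha : a ≠ 0)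
    {z : HahnSeries Γ R} (hz : z ^ n - z = single c a) :
    n • z.order = c ∧ z.leadingCoeff ^ n = a := by
  have hz0 := ne_zero_of_pow_sub_self_eq_single (by omega) ha hz
  have hcoeff (x : Γ) : (z ^ n).coeff x = z.coeff x + (single c a).coeff x := by
    rw [← coeff_add, ← hz, add_sub_cancel]
  have horder_neg : z.order < 0 := by
    by_contra! h
    have hc_lt_pow : c < (z ^ n).order := by rw [order_pow]; exact hc.trans_le (nsmul_nonneg h n)
    have := hcoeff c
    rw [coeff_eq_zero_of_lt_order hc_lt_pow, coeff_eq_zero_of_lt_order (hc.trans_le h),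
      coeff_single_same, zero_add] at this
    exact ha this.symm
  have hlt : n • z.order < z.order := by
    simpa using nsmul_lt_nsmul_left (neg_pos.2 horder_neg) hn
  have hlead := hcoeff (n • z.order)
  rw [← order_pow, ← leadingCoeff_eq, leadingCoeff_pow, order_pow,
    coeff_eq_zero_of_lt_order hlt, zero_add] at hlead
  by_cases h : n • z.order = c
  · rw [h, coeff_single_same] at hlead
    exact ⟨h, hlead⟩
  · rw [coeff_single_of_ne h] at hlead
    exact absurd hlead (pow_ne_zero _ (leadingCoeff_ne_zero.2 hz0))

theorem sub_single_order_leadingCoeff_pow_char_sub_self [CommRing R] [NoZeroDivisors R]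
    {p : ℕ} [Fact p.Prime] [CharP R p] {c : Γ} (hc : c < 0) {a : R} (ha : a ≠ 0)
    {z : HahnSeries Γ R} (hz : z ^ p - z = single c a) :
    (z - single z.order z.leadingCoeff) ^ p - (z - single z.order z.leadingCoeff) =
      single z.order z.leadingCoeff := by
  obtain ⟨horder, hlead⟩ := nsmul_order_eq_and_leadingCoeff_pow_eq_of_pow_sub_self_eq_single
    (Fact.out : p.Prime).one_lt hc ha hz
  rw [sub_pow_char, single_pow, horder, hlead, ← hz]
  ring

end ArtinSchreier

section OrderedField

variable [Field Γ] [LinearOrder Γ] [IsStrictOrderedRing Γ] {p : ℕ} [hp : Fact p.Prime] {c : Γ}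

theorem order_eq_div_of_pow_sub_self_eq_single [Ring R] [NoZeroDivisors R] {a : R}
    {z : HahnSeries Γ R} (hc : c < 0) (ha : a ≠ 0) (hz : z ^ p - z = single c a) :
    z.order = c / p := by
  obtain ⟨horder, -⟩ := nsmul_order_eq_and_leadingCoeff_pow_eq_of_pow_sub_self_eq_single
    hp.out.one_lt hc ha hz
  have hp0 : (p : Γ) ≠ 0 := by exact_mod_cast hp.out.ne_zero
  rw [← horder, nsmul_eq_mul, mul_div_cancel_left₀ _ hp0]

theorem coeff_div_pow_ne_zero_of_pow_sub_self_eq_single [CommRing R] [NoZeroDivisors R]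
    [CharP R p] {a : R} {z : HahnSeries Γ R} (hc : c < 0) (ha : a ≠ 0)
    (hz : z ^ p - z = single c a) (n : ℕ) : z.coeff (c / p ^ (n + 1)) ≠ 0 := by
  have hp1 : (1 : Γ) < p := by exact_mod_cast hp.out.one_lt
  induction n generalizing c a z with
  | zero =>
    rw [pow_one, ← order_eq_div_of_pow_sub_self_eq_single hc ha hz]
    exact mt coeff_order_eq_zero.1 (ne_zero_of_pow_sub_self_eq_single hp.out.ne_zero ha hz)
  | succ n ih =>
    have hz0 := ne_zero_of_pow_sub_self_eq_single hp.out.ne_zero ha hz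
    have horder := order_eq_div_of_pow_sub_self_eq_single hc ha hz
    have horder_neg : z.order < 0 := horder ▸ div_neg_of_neg_of_pos hc (zero_lt_one.trans hp1)
    have hne : z.order / p ^ (n + 1) ≠ z.order := by
      have := div_lt_self (neg_pos.2 horder_neg) (one_lt_pow₀ hp1 n.succ_ne_zero)
      rw [neg_div] at this
      exact (neg_lt_neg_iff.1 this).ne'
    have key := ih horder_neg (leadingCoeff_ne_zero.2 hz0)
      (sub_single_order_leadingCoeff_pow_char_sub_self hc ha hz)
    rwa [coeff_sub, coeff_single_of_ne hne, sub_zero, horder, div_div, ← pow_succ'] at key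

end OrderedField

end HahnSeries

theorem not_isGenPuiseuxOver_of_pow_sub_self_eq_single {k : Type*} [CommRing k]
    [NoZeroDivisors k] {p : ℕ} [Fact p.Prime] [CharP k p] {c : ℝ} (hc : c < 0) {a : k}
    (ha : a ≠ 0) {z : HahnSeries ℝ k} (hz : z ^ p - z = HahnSeries.single c a) :
    ¬ IsGenPuiseuxOver k z := by
  have hp1 : (1 : ℝ) < p := by exact_mod_cast (Fact.out : p.Prime).one_lt
  have hinj : Function.Injective fun n : ℕ => c / p ^ (n + 1) := by
    intro m n h
    simp only [div_eq_mul_inv, mul_right_inj' hc.ne, inv_inj] at h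
    exact Nat.succ_injective (pow_right_injective₀ (zero_lt_one.trans hp1) hp1.ne' h)
  refine fun hz' => Set.infinite_of_injective_forall_mem hinj (fun n => ?_) (hz' 0)
  exact ⟨HahnSeries.coeff_div_pow_ne_zero_of_pow_sub_self_eq_single hc ha hz n,
    (div_neg_of_neg_of_pos hc (by positivity)).le⟩

theorem genPuiseux_not_algClosed_charP_general (k : Type*) [Field k]
    (p : ℕ) [Fact p.Prime] [CharP k p] :
    ¬ ∃ y : HahnSeries ℝ k, IsGenPuiseuxOver k y ∧
        y ^ p - y - HahnSeries.single (-1 : ℝ) (1 : k) = 0 := by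
  rintro ⟨y, hy, hroot⟩
  exact not_isGenPuiseuxOver_of_pow_sub_self_eq_single neg_one_lt_zero one_ne_zero
    (sub_eq_zero.1 hroot) hy

/-- For an algebraically closed field `k` of characteristic `p > 0`, the field `𝕂_k` of
generalised Puiseux series over `k` is not algebraically closed: the Artin–Schreier
polynomial `F = y ^ p - y - t⁻¹` (whose coefficients lie in `𝕂_k`, `t⁻¹` being the
single-term series with coefficient `1` at exponent `-1`) has no root in `𝕂_k`. -/
theorem genPuiseux_not_algClosed_charP (k : Type*) [Field k] [IsAlgClosed k]
    (p : ℕ) [Fact p.Prime] [CharP k p] :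
    ¬ ∃ y : HahnSeries ℝ k, IsGenPuiseuxOver k y ∧
        y ^ p - y - HahnSeries.single (-1 : ℝ) (1 : k) = 0 :=
  genPuiseux_not_algClosed_charP_general k p
end

section
/- The valuation ring R_val = {f ∈ 𝕂 : val(f) ≥ 0} ∪ {0} of the field 𝕂 of generalised Puiseux series over ℂ has Krull dimension one. -/
/-- The valuation ring `R_val = {f ∈ 𝕂 : val f ≥ 0} ∪ {0}` of the field `𝕂` of
generalised Puiseux series, realised as a subring of `HahnSeries ℝ ℂ` (note that
`orderTop 0 = ⊤ ≥ 0`, so `0` belongs to the carrier). -/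
noncomputable def genPuiseuxValuationRing : Subring (HahnSeries ℝ ℂ) where
  carrier := {f | IsGenPuiseux f ∧ 0 ≤ f.orderTop}
  zero_mem' := by
    constructor
    · intro M; simp [IsGenPuiseux, HahnSeries.support_zero]
    · simp [HahnSeries.orderTop_zero]
  one_mem' := by
    constructor
    · intro M
      exact (Set.finite_singleton (0 : ℝ)).subset
        (Set.inter_subset_left.trans (by rw [HahnSeries.support_one]))
    · rw [HahnSeries.orderTop_one]
  add_mem' := by
    rintro a b ⟨haG, haO⟩ ⟨hbG, hbO⟩
    constructor
    · intro M
      refine ((haG M).union (hbG M)).subset ?_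
      intro x hx
      rcases HahnSeries.support_add_subset _ _ hx.1 with h | h
      · exact Or.inl ⟨h, hx.2⟩
      · exact Or.inr ⟨h, hx.2⟩
    · exact le_trans (le_min haO hbO) HahnSeries.min_orderTop_le_orderTop_add
  neg_mem' := by
    rintro a ⟨haG, haO⟩
    constructor
    · intro M; rw [HahnSeries.support_neg]; exact haG M
    · rw [HahnSeries.orderTop_neg]; exact haO
  mul_mem' := by
    rintro a b ⟨haG, haO⟩ ⟨hbG, hbO⟩
    refine ⟨?_, ?_⟩
    · intro M
      by_cases ha0 : a = 0
      · simp [ha0, IsGenPuiseux, HahnSeries.support_zero]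
      by_cases hb0 : b = 0
      · simp [hb0, IsGenPuiseux, HahnSeries.support_zero]
      -- supports are nonempty well-founded sets, hence have minima
      have haWF : a.support.IsWF := a.isPWO_support.isWF
      have hbWF : b.support.IsWF := b.isPWO_support.isWF
      have hane : a.support.Nonempty := HahnSeries.support_nonempty_iff.2 ha0
      have hbne : b.support.Nonempty := HahnSeries.support_nonempty_iff.2 hb0
      set ma := haWF.min hane with hma
      set mb := hbWF.min hbne with hmb
      have key : (a * b).support ∩ Set.Iic M ⊆
          (fun p : ℝ × ℝ => p.1 + p.2) ''
            ((a.support ∩ Set.Iic (M - mb)) ×ˢ (b.support ∩ Set.Iic (M - ma))) := by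
        rintro x ⟨hxs, hxM⟩
        obtain ⟨α, hα, β, hβ, rfl⟩ := HahnSeries.support_mul_subset hxs
        refine ⟨(α, β), ⟨⟨hα, ?_⟩, ⟨hβ, ?_⟩⟩, rfl⟩
        · simp only [Set.mem_Iic] at hxM ⊢
          linarith [hbWF.min_le hbne hβ]
        · simp only [Set.mem_Iic] at hxM ⊢
          linarith [haWF.min_le hane hα]
      exact (((haG (M - mb)).prod (hbG (M - ma))).image _).subset key
    · calc (0 : WithTop ℝ) = 0 + 0 := by rw [add_zero]
        _ ≤ a.orderTop + b.orderTop := add_le_add haO hbO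
        _ ≤ (a * b).orderTop := HahnSeries.orderTop_add_le_mul

/-!
The Hahn-series valuation restricted to `𝕂` has `R_val` as its valuation ring, the key
point being that `𝕂` is closed under inversion: `f⁻¹ = c tᵃ ∑ uⁿ` with `val u ≥ δ > 0`, and
only the finitely many powers with `n δ ≤ M` contribute exponents `≤ M`. Hence `a ∣ b`
in `R_val` as soon as `val a ≤ val b`, so `R_val` is local with maximal ideal `{val > 0}`.
As the value group `ℝ` is archimedean, every element of positive valuation has a power
divisible by any given nonzero `x`, so the maximal ideal is the only nonzero prime.
-/

open HahnSeries

theorem WithTop.exists_coe_pos_le_s12 {α : Type*} [Preorder α] [Zero α] [NoMaxOrder α]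
    {a : WithTop α} (ha : 0 < a) : ∃ δ : α, 0 < δ ∧ (δ : WithTop α) ≤ a := by
  induction a with
  | top =>
    obtain ⟨δ, hδ⟩ := exists_gt (0 : α)
    exact ⟨δ, hδ, le_top⟩
  | coe a => exact ⟨a, WithTop.coe_pos.mp ha, le_rfl⟩

theorem HahnSeries.coe_nsmul_le_orderTop_pow {Γ R : Type*} [AddCancelCommMonoid Γ]
    [LinearOrder Γ] [IsOrderedCancelAddMonoid Γ] [Ring R] [IsDomain R] {x : HahnSeries Γ R} {δ : Γ}
    (h : (δ : WithTop Γ) ≤ x.orderTop) (n : ℕ) :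
    ((n • δ : Γ) : WithTop Γ) ≤ (x ^ n).orderTop := by
  rw [WithTop.coe_nsmul, ← addVal_apply, AddValuation.map_pow, addVal_apply]
  exact nsmul_le_nsmul_right h n

namespace IsGenPuiseux

variable {f g : HahnSeries ℝ ℂ}

theorem zero : IsGenPuiseux 0 := fun _ => by simp

theorem single (a : ℝ) (r : ℂ) : IsGenPuiseux (HahnSeries.single a r) := fun _ =>
  (Set.finite_singleton a).subset (Set.inter_subset_left.trans support_single_subset)

theorem one : IsGenPuiseux 1 := by
  rw [← single_zero_one]
  exact single 0 1

theorem add_s12 (hf : IsGenPuiseux f) (hg : IsGenPuiseux g) : IsGenPuiseux (f + g) := fun M =>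
  ((hf M).union (hg M)).subset fun _ ⟨hx, hxM⟩ =>
    (support_add_subset f g hx).imp (⟨·, hxM⟩) (⟨·, hxM⟩)

theorem neg_s12 (hf : IsGenPuiseux f) : IsGenPuiseux (-f) := by
  simpa [IsGenPuiseux] using hf

theorem sub_s12 (hf : IsGenPuiseux f) (hg : IsGenPuiseux g) : IsGenPuiseux (f - g) := by
  simpa [sub_eq_add_neg] using hf.add_s12 hg.neg_s12

theorem mul_s12 (hf : IsGenPuiseux f) (hg : IsGenPuiseux g) : IsGenPuiseux (f * g) := by
  intro M
  refine ((hf (M - g.order)).image2 (· + ·) (hg (M - f.order))).subset ?_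
  rintro _ ⟨hx, hxM⟩
  obtain ⟨a, ha, b, hb, rfl⟩ := support_mul_subset hx
  have hfa := order_le_of_coeff_ne_zero ha
  have hgb := order_le_of_coeff_ne_zero hb
  simp only [Set.mem_Iic] at hxM
  exact ⟨a, ⟨ha, Set.mem_Iic.mpr (by linarith)⟩, b, ⟨hb, Set.mem_Iic.mpr (by linarith)⟩,
    rfl⟩

theorem pow_s12 (hf : IsGenPuiseux f) (n : ℕ) : IsGenPuiseux (f ^ n) := by
  induction n with
  | zero => simpa using one
  | succ n ih => simpa [pow_succ] using ih.mul_s12 hf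

theorem hsum_powers_s12 (hf : IsGenPuiseux f) : IsGenPuiseux (SummableFamily.powers f).hsum := by
  -- `powers f` is the family of powers of `0` unless `0 < f.orderTop`.
  obtain ⟨u, hu, hu0, hpow⟩ : ∃ u, IsGenPuiseux u ∧ 0 < u.orderTop ∧
      ∀ n, SummableFamily.powers f n = u ^ n := by
    by_cases h : 0 < f.orderTop
    · exact ⟨f, hf, h, by simp [h]⟩
    · exact ⟨0, zero, by simp, by simp [h]⟩
  obtain ⟨δ, hδ, hδu⟩ := WithTop.exists_coe_pos_le_s12 hu0
  intro M
  obtain ⟨N, hN⟩ := Archimedean.arch M hδ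
  refine ((Set.finite_Iic N).biUnion fun n _ => hu.pow_s12 n M).subset ?_
  rintro g ⟨hg, hgM⟩
  obtain ⟨n, hn⟩ := Set.mem_iUnion.mp (SummableFamily.support_hsum_subset hg)
  rw [hpow] at hn
  have hnδ : n • δ ≤ g := WithTop.coe_le_coe.mp
    ((coe_nsmul_le_orderTop_pow hδu n).trans (orderTop_le_of_coeff_ne_zero hn))
  exact Set.mem_biUnion ((nsmul_le_nsmul_iff_left hδ).mp (hnδ.trans (hgM.trans hN))) ⟨hn, hgM⟩

theorem inv_s12 (hf : IsGenPuiseux f) : IsGenPuiseux f⁻¹ := by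
  rw [inv_def]
  exact (single _ _).mul_s12 (one.sub_s12 ((single _ _).mul_s12 hf)).hsum_powers_s12

end IsGenPuiseux

namespace genPuiseuxValuationRing

theorem orderTop_coe_nonneg (f : genPuiseuxValuationRing) :
    0 ≤ (f : HahnSeries ℝ ℂ).orderTop :=
  f.2.2

theorem dvd_of_orderTop_le {a b : genPuiseuxValuationRing}
    (h : (a : HahnSeries ℝ ℂ).orderTop ≤ (b : HahnSeries ℝ ℂ).orderTop) : a ∣ b := by
  by_cases ha : (a : HahnSeries ℝ ℂ) = 0
  · rw [ha, orderTop_zero, top_le_iff, orderTop_eq_top] at h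
    exact ⟨0, Subtype.ext (by simp [h])⟩
  have hab : (a : HahnSeries ℝ ℂ) * (b / a) = b := mul_div_cancel₀ _ ha
  have hmem : (b : HahnSeries ℝ ℂ) / a ∈ genPuiseuxValuationRing := by
    refine ⟨b.2.1.mul_s12 a.2.1.inv_s12, WithTop.le_of_add_le_add_left (orderTop_ne_top.mpr ha) ?_⟩
    rwa [add_zero, ← orderTop_mul, hab]
  exact ⟨⟨_, hmem⟩, Subtype.ext hab.symm⟩

instance : ValuationRing genPuiseuxValuationRing :=
  ValuationRing.iff_dvd_total.mpr
    ⟨fun _ _ => (le_total _ _).imp dvd_of_orderTop_le dvd_of_orderTop_le⟩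

theorem isUnit_iff {f : genPuiseuxValuationRing} :
    IsUnit f ↔ (f : HahnSeries ℝ ℂ).orderTop = 0 := by
  refine ⟨fun ⟨u, hu⟩ => ?_, fun h => isUnit_of_dvd_one (dvd_of_orderTop_le ?_)⟩
  · have hval :=
      congrArg (fun x : genPuiseuxValuationRing => (x : HahnSeries ℝ ℂ).orderTop) u.mul_inv
    simp only [Subring.coe_mul, orderTop_mul, Subring.coe_one, orderTop_one] at hval
    rw [← hu]
    exact le_antisymm (hval ▸ le_add_of_nonneg_right (orderTop_coe_nonneg _))
      (orderTop_coe_nonneg _)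
  · simp [h]

theorem mem_maximalIdeal_iff {f : genPuiseuxValuationRing} :
    f ∈ IsLocalRing.maximalIdeal genPuiseuxValuationRing ↔
      0 < (f : HahnSeries ℝ ℂ).orderTop := by
  rw [IsLocalRing.mem_maximalIdeal, mem_nonunits_iff, isUnit_iff,
    (orderTop_coe_nonneg f).lt_iff_ne, ne_comm]

theorem not_isField : ¬IsField genPuiseuxValuationRing := by
  have ht : HahnSeries.single (1 : ℝ) (1 : ℂ) ∈ genPuiseuxValuationRing :=
    ⟨IsGenPuiseux.single 1 1, by simp [orderTop_single]⟩
  rw [IsLocalRing.isField_iff_maximalIdeal_eq, ← ne_eq, Submodule.ne_bot_iff]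
  refine ⟨⟨_, ht⟩, mem_maximalIdeal_iff.mpr (by simp [orderTop_single]), ?_⟩
  simp [← Subtype.coe_inj]

theorem maximalIdeal_le_radical_span_singleton {x : genPuiseuxValuationRing} (hx : x ≠ 0) :
    IsLocalRing.maximalIdeal genPuiseuxValuationRing ≤ (Ideal.span {x}).radical := by
  intro f hf
  obtain ⟨δ, hδ, hδf⟩ := WithTop.exists_coe_pos_le_s12 (mem_maximalIdeal_iff.mp hf)
  obtain ⟨n, hn⟩ := Archimedean.arch (x : HahnSeries ℝ ℂ).order hδ
  refine Ideal.mem_radical_iff.mpr ⟨n, Ideal.mem_span_singleton.mpr (dvd_of_orderTop_le ?_)⟩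
  calc (x : HahnSeries ℝ ℂ).orderTop = (x : HahnSeries ℝ ℂ).order :=
        (order_eq_orderTop_of_ne_zero (by simpa using hx)).symm
    _ ≤ ((n • δ : ℝ) : WithTop ℝ) := WithTop.coe_le_coe.mpr hn
    _ ≤ ((f : HahnSeries ℝ ℂ) ^ n).orderTop := coe_nsmul_le_orderTop_pow hδf n
    _ = ((f ^ n : genPuiseuxValuationRing) : HahnSeries ℝ ℂ).orderTop := by simp

end genPuiseuxValuationRing

/-- The valuation ring `R_val` of the field `𝕂` of generalised Puiseux series over `ℂ`
has Krull dimension one. -/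
theorem genPuiseuxValuationRing_krullDim_eq_one :
    ringKrullDim genPuiseuxValuationRing = 1 :=
  ringKrullDim_eq_one_iff_of_isLocalRing_isDomain.mpr
    ⟨genPuiseuxValuationRing.not_isField,
      fun _ hx => genPuiseuxValuationRing.maximalIdeal_le_radical_span_singleton hx⟩
end
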